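/- Consider an instance of P_m||C_max with m ≥ 1 machines and n jobs with processing times p_1 ≥ p_2 ≥ … ≥ p_n ≥ 0, and let k ≥ 3. If the critical machine of an LPT schedule is assigned exactly k jobs, then C^LPT ≤ ((k+1)/k − 1/(k·m)) · C*. -/

import Mathlib

/-!
Let `j` be the last job on the critical machine and `q = p j`. When `j` was scheduled its
machine was the least loaded one, so `m (C - q) ≤ ∑_{t < j} p t ≤ ∑ p - q ≤ m C* - q`; it
remains to show `k q ≤ C*`. Count a job `t` as `⌊p t / q⌋` slots of size `q`. Any schedule of
makespan below `k q` holds fewer than `k` slots per machine. In the LPT schedule, however, every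
machine has filled at least `k - 1` slots before `j` is scheduled (an invariant comparing it with
the machine of `j`, maintained along the list), so the jobs up to `j` carry at least
`m (k - 1) + 1` slots.
-/

open Finset

/-- Load of machine `i` under schedule `σ` with processing times `p`. -/
def mload {m n : ℕ} (p : Fin n → ℝ) (σ : Fin n → Fin m) (i : Fin m) : ℝ :=
  ∑ j ∈ Finset.univ.filter (fun j => σ j = i), p j

/-- Makespan of a schedule: the maximum machine load. -/
noncomputable def makespan {m n : ℕ} (p : Fin n → ℝ) (σ : Fin n → Fin m) : ℝ :=
  ⨆ i : Fin m, mload p σ i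

/-- Optimal makespan `C*`: minimum makespan over all schedules on `m` machines. -/
noncomputable def optMakespan (m : ℕ) {n : ℕ} (p : Fin n → ℝ) : ℝ :=
  ⨅ σ : Fin n → Fin m, makespan p σ

/-- Processing times are sorted non-increasingly and are nonnegative. -/
def SortedNonneg {n : ℕ} (p : Fin n → ℝ) : Prop :=
  (∀ i j : Fin n, i ≤ j → p j ≤ p i) ∧ ∀ j, 0 ≤ p j

/-- Load of machine `i` just before job `j` is assigned, when all jobs of `T`
are placed first and the remaining jobs are assigned in index order:
it counts all jobs of `T` on machine `i` plus all jobs of index `< j` on machine `i`. -/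
def prefLoad {m n : ℕ} (p : Fin n → ℝ) (σ : Fin n → Fin m) (T : Finset (Fin n))
    (j : Fin n) (i : Fin m) : ℝ :=
  ∑ j' ∈ Finset.univ.filter (fun j' => (j' ∈ T ∨ j' < j) ∧ σ j' = i), p j'

/-- `σ` is a list schedule obtained by first placing all jobs of `T` together on
one machine and then assigning the remaining jobs in index order (i.e. in
non-increasing order of processing time, for sorted `p`), each to a machine of
minimal current load. -/
def IsLSAfter {m n : ℕ} (p : Fin n → ℝ) (T : Finset (Fin n)) (σ : Fin n → Fin m) : Prop :=
  (∀ j ∈ T, ∀ j' ∈ T, σ j = σ j') ∧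
  ∀ j, j ∉ T → ∀ i, prefLoad p σ T j (σ j) ≤ prefLoad p σ T j i

/-- `σ` is an LPT schedule: jobs assigned in order `1,…,n`, each to a machine of
minimal current load. -/
def IsLPT {m n : ℕ} (p : Fin n → ℝ) (σ : Fin n → Fin m) : Prop :=
  IsLSAfter p ∅ σ

/-- `j'` is the critical job of schedule `σ`: it is assigned to a critical machine
(one whose load equals the makespan), and it is the largest-indexed job assigned
to a critical machine. -/
def IsCriticalJob {m n : ℕ} (p : Fin n → ℝ) (σ : Fin n → Fin m) (j' : Fin n) : Prop :=
  mload p σ (σ j') = makespan p σ ∧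
  ∀ j : Fin n, mload p σ (σ j) = makespan p σ → j ≤ j'

/-- The (1-based) position of job `j'` on its machine: the number of jobs of index
`≤ j'` assigned to the same machine as `j'`. -/
def posOn {m n : ℕ} (σ : Fin n → Fin m) (j' : Fin n) : ℕ :=
  (Finset.univ.filter (fun t => σ t = σ j' ∧ t ≤ j')).card

/-- The tuple of the `k` consecutive jobs `j'-k+1, …, j'` (in 1-based terms). -/
def tupleSet {n : ℕ} (j' : Fin n) (k : ℕ) : Finset (Fin n) :=
  Finset.univ.filter (fun t => t ≤ j' ∧ j'.val < t.val + k)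

/-- An LPT′ schedule for critical job `j'`: job `j'` is placed alone on a machine
first, then the remaining jobs are assigned in index order, each to a machine of
minimal current load. -/
def IsLPTprime {m n : ℕ} (p : Fin n → ℝ) (j' : Fin n) (σ' : Fin n → Fin m) : Prop :=
  IsLSAfter p {j'} σ'

/-- An LPT″ schedule for critical job `j'` in position `k`: jobs `j'-k+1,…,j'` are
placed together on one machine first, then the remaining jobs are assigned in
non-increasing order of processing time, each to a machine of minimal current load. -/
def IsLPTsec {m n : ℕ} (p : Fin n → ℝ) (j' : Fin n) (k : ℕ) (σ'' : Fin n → Fin m) : Prop :=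
  IsLSAfter p (tupleSet j' k) σ''

section Makespan

variable {m n : ℕ} (p : Fin n → ℝ) (τ : Fin n → Fin m)

theorem mload_le_makespan (c : Fin m) : mload p τ c ≤ makespan p τ :=
  le_ciSup (Set.finite_range _).bddAbove c

theorem sum_le_mul_makespan : ∑ t, p t ≤ m * makespan p τ := by
  calc ∑ t, p t = ∑ c, mload p τ c := (sum_fiberwise univ τ p).symm
    _ ≤ ∑ _c : Fin m, makespan p τ := sum_le_sum fun c _ => mload_le_makespan p τ c
    _ = m * makespan p τ := by simp

theorem sum_le_mul_optMakespan [Nonempty (Fin m)] : ∑ t, p t ≤ m * optMakespan m p := by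
  have hm : (0 : ℝ) < m := Nat.cast_pos.2 Fin.pos'
  rw [← div_le_iff₀' hm]
  exact le_ciInf fun τ => (div_le_iff₀' hm).2 (sum_le_mul_makespan p τ)

theorem makespan_nonneg [Nonempty (Fin m)] (hp : ∀ t, 0 ≤ p t) : 0 ≤ makespan p τ :=
  (sum_nonneg fun t _ => hp t).trans (mload_le_makespan p τ (Classical.arbitrary _))

theorem sum_floor_div_le_mul_floor_makespan {q : ℝ} (hq : 0 < q) :
    ∑ t, ⌊p t / q⌋ ≤ m * ⌊makespan p τ / q⌋ := by
  have hmachine (c : Fin m) : ∑ t with τ t = c, ⌊p t / q⌋ ≤ ⌊makespan p τ / q⌋ := by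
    rw [Int.le_floor, Int.cast_sum]
    calc ∑ t with τ t = c, (⌊p t / q⌋ : ℝ) ≤ ∑ t with τ t = c, p t / q :=
          sum_le_sum fun t _ => Int.floor_le _
      _ = mload p τ c / q := by rw [mload, sum_div]
      _ ≤ makespan p τ / q := div_le_div_of_nonneg_right (mload_le_makespan p τ c) hq.le
  calc ∑ t, ⌊p t / q⌋ = ∑ c, ∑ t with τ t = c, ⌊p t / q⌋ := (sum_fiberwise univ τ _).symm
    _ ≤ ∑ _c : Fin m, ⌊makespan p τ / q⌋ := sum_le_sum fun c _ => hmachine c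
    _ = m * ⌊makespan p τ / q⌋ := by simp

end Makespan

section JobsBefore

variable {m n : ℕ} (σ : Fin n → Fin m)

def jobsBefore (s : ℕ) (c : Fin m) : Finset (Fin n) :=
  {t | (t : ℕ) < s ∧ σ t = c}

variable {σ}

@[simp]
theorem mem_jobsBefore {s : ℕ} {c : Fin m} {t : Fin n} :
    t ∈ jobsBefore σ s c ↔ (t : ℕ) < s ∧ σ t = c := by
  simp [jobsBefore]

@[simp]
theorem jobsBefore_zero (c : Fin m) : jobsBefore σ 0 c = ∅ := by
  ext; simp

theorem self_notMem_jobsBefore (t : Fin n) (c : Fin m) : t ∉ jobsBefore σ t c := by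
  simp

theorem jobsBefore_succ_of_eq {s : ℕ} (hs : s < n) {c : Fin m} (hc : σ ⟨s, hs⟩ = c) :
    jobsBefore σ (s + 1) c = insert ⟨s, hs⟩ (jobsBefore σ s c) := by
  ext t
  simp only [mem_jobsBefore, mem_insert, Nat.lt_succ_iff_lt_or_eq]
  constructor
  · rintro ⟨hts | hts, htc⟩
    exacts [Or.inr ⟨hts, htc⟩, Or.inl (Fin.ext hts)]
  · rintro (rfl | ⟨hts, htc⟩)
    exacts [⟨Or.inr rfl, hc⟩, ⟨Or.inl hts, htc⟩]

theorem jobsBefore_succ_of_ne {s : ℕ} (hs : s < n) {c : Fin m} (hc : σ ⟨s, hs⟩ ≠ c) :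
    jobsBefore σ (s + 1) c = jobsBefore σ s c := by
  ext t
  simp only [mem_jobsBefore, Nat.lt_succ_iff_lt_or_eq, and_congr_left_iff]
  intro htc
  refine ⟨?_, Or.inl⟩
  rintro (hts | hts)
  exacts [hts, absurd ((Fin.ext hts : t = ⟨s, hs⟩) ▸ htc) hc]

theorem sum_sum_jobsBefore {M : Type*} [AddCommMonoid M] (f : Fin n → M) (s : ℕ) :
    ∑ c, ∑ t ∈ jobsBefore σ s c, f t = ∑ t : Fin n with t.val < s, f t := by
  simp_rw [← sum_fiberwise {t : Fin n | t.val < s} σ f, jobsBefore, filter_filter]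

theorem nsmul_le_sum_of_le_sum_jobsBefore {M : Type*} [AddCommMonoid M] [PartialOrder M]
    [IsOrderedAddMonoid M] {f : Fin n → M} {s : ℕ} {x : M}
    (hx : ∀ c, x ≤ ∑ t ∈ jobsBefore σ s c, f t) : m • x ≤ ∑ t : Fin n with t.val < s, f t := by
  simpa [sum_sum_jobsBefore] using card_nsmul_le_sum univ _ x fun c _ => hx c

theorem add_sum_val_lt_le_sum {M : Type*} [AddCommMonoid M] [PartialOrder M]
    [IsOrderedAddMonoid M] {f : Fin n → M} (hf : ∀ t, 0 ≤ f t) (j : Fin n) :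
    f j + ∑ t : Fin n with t.val < j.val, f t ≤ ∑ t, f t := by
  rw [← sum_insert (s := {t : Fin n | t.val < j.val}) (by simp)]
  exact sum_le_sum_of_subset_of_nonneg (subset_univ _) fun t _ _ => hf t

theorem filter_eq_insert_jobsBefore {j : Fin n} (hj : ∀ t, σ t = σ j → t ≤ j) :
    ({t | σ t = σ j} : Finset (Fin n)) = insert j (jobsBefore σ j (σ j)) := by
  ext t
  simp only [mem_filter, mem_univ, true_and, mem_insert, mem_jobsBefore, ← Fin.lt_def]
  constructor
  · intro ht
    rcases (hj t ht).lt_or_eq with hlt | rfl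
    exacts [Or.inr ⟨hlt, ht⟩, Or.inl rfl]
  · rintro (rfl | ⟨-, ht⟩)
    exacts [rfl, ht]

end JobsBefore

theorem prefLoad_empty {m n : ℕ} (p : Fin n → ℝ) (σ : Fin n → Fin m) (t : Fin n) (c : Fin m) :
    prefLoad p σ ∅ t c = ∑ t' ∈ jobsBefore σ t c, p t' := by
  unfold prefLoad
  congr 1
  ext t'
  simp

theorem IsLPT.sum_jobsBefore_le {m n : ℕ} {p : Fin n → ℝ} {σ : Fin n → Fin m} (hσ : IsLPT p σ)
    (t : Fin n) (c : Fin m) :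
    ∑ t' ∈ jobsBefore σ t (σ t), p t' ≤ ∑ t' ∈ jobsBefore σ t c, p t' := by
  simpa only [prefLoad_empty] using hσ.2 t (notMem_empty t) c

/-- `D` is the load of a machine `g` minus the load of a machine `h`, `K` is the number of
`q`-slots `∑ ⌊p t / q⌋` filled on `g` minus the number of jobs on `h`, and `a` is the size of the
next job to be scheduled. -/
def SlotBalance (q D : ℝ) (K : ℤ) (a : ℝ) : Prop :=
  (0 ≤ K ∧ D < (K + 1) * q) ∨ (K = -1 ∧ D + a < q)

namespace SlotBalance

variable {q D a a' : ℝ} {K : ℤ}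

theorem zero (hq : 0 < q) : SlotBalance q 0 0 a :=
  Or.inl ⟨le_rfl, by simpa using hq⟩

theorem mono (h : SlotBalance q D K a) (ha : a' ≤ a) : SlotBalance q D K a' := by
  rcases h with h | ⟨hK, hD⟩
  exacts [Or.inl h, Or.inr ⟨hK, by linarith⟩]

theorem add_job (hq : 0 < q) (h : SlotBalance q D K a) (hD : D ≤ 0) (hqa : q ≤ a) :
    SlotBalance q (D + a) (K + ⌊a / q⌋) a' := by
  have hslot : (1 : ℤ) ≤ ⌊a / q⌋ := Int.le_floor.2 (by simpa [le_div_iff₀ hq] using hqa)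
  have hslot' : (1 : ℝ) ≤ ⌊a / q⌋ := by exact_mod_cast hslot
  have hfloor : a < (⌊a / q⌋ + 1) * q := (div_lt_iff₀ hq).1 (Int.lt_floor_add_one _)
  left
  rcases h with ⟨hK, -⟩ | ⟨rfl, hDa⟩
  · have hK' : (0 : ℝ) ≤ K := by exact_mod_cast hK
    refine ⟨by omega, ?_⟩
    push_cast
    nlinarith
  · refine ⟨by omega, ?_⟩
    push_cast
    nlinarith

theorem sub_job (h : SlotBalance q D K a) (hD : 0 ≤ D) (hqa : q ≤ a) (ha : a' ≤ a) :
    SlotBalance q (D - a) (K - 1) a' := by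
  rcases h with ⟨hK, hDK⟩ | ⟨-, hDa⟩
  · rcases hK.eq_or_lt with rfl | hK
    · exact Or.inr ⟨by norm_num, by push_cast at hDK; linarith⟩
    · exact Or.inl ⟨by omega, by push_cast; linarith⟩
  · linarith

theorem nonneg (h : SlotBalance q D K q) (hD : 0 ≤ D) : 0 ≤ K := by
  rcases h with ⟨hK, -⟩ | ⟨-, hDq⟩
  exacts [hK, by linarith]

end SlotBalance

section LPT

variable {m n : ℕ} {p : Fin n → ℝ} {σ : Fin n → Fin m}

-- `g` receives a job only while it is no heavier than `h`, and `h` only while it is no heavier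
-- than `g`; this is what keeps the balance from degrading.
theorem IsLPT.slotBalance_jobsBefore (hσ : IsLPT p σ) (hp : Antitone p) {j : Fin n}
    (hq : 0 < p j) {g h : Fin m} (hgh : g ≠ h) (s : ℕ) (hs : s ≤ j.val) :
    SlotBalance (p j) (∑ t ∈ jobsBefore σ s g, p t - ∑ t ∈ jobsBefore σ s h, p t)
      (∑ t ∈ jobsBefore σ s g, ⌊p t / p j⌋ - #(jobsBefore σ s h)) (p ⟨s, hs.trans_lt j.2⟩) := by
  induction s with
  | zero => simpa using SlotBalance.zero hq
  | succ s ih =>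
    have hsj : s < j.val := hs
    set t : Fin n := ⟨s, hsj.trans j.2⟩
    have hmin := hσ.sum_jobsBefore_le t
    have hqa : p j ≤ p t := hp hsj.le
    have ha : p ⟨s + 1, hs.trans_lt j.2⟩ ≤ p t := hp (Nat.le_succ s)
    have hnot (c : Fin m) : t ∉ jobsBefore σ s c := self_notMem_jobsBefore t c
    by_cases htg : σ t = g
    · rw [jobsBefore_succ_of_eq _ htg, jobsBefore_succ_of_ne _ (htg ▸ hgh), sum_insert (hnot g),
        sum_insert (hnot g)]
      convert (ih hsj.le).add_job hq (by linarith [htg ▸ hmin h]) hqa using 1 <;> ring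
    by_cases hth : σ t = h
    · rw [jobsBefore_succ_of_eq _ hth, jobsBefore_succ_of_ne _ htg, sum_insert (hnot h),
        card_insert_of_notMem (hnot h)]
      convert (ih hsj.le).sub_job (by linarith [hth ▸ hmin g]) hqa ha using 1
        <;> push_cast <;> ring
    · rw [jobsBefore_succ_of_ne _ htg, jobsBefore_succ_of_ne _ hth]
      exact (ih hsj.le).mono ha

theorem IsLPT.card_jobsBefore_le_sum_floor (hσ : IsLPT p σ) (hp : Antitone p) {j : Fin n}
    (hq : 0 < p j) (g : Fin m) :
    (#(jobsBefore σ j (σ j)) : ℤ) ≤ ∑ t ∈ jobsBefore σ j g, ⌊p t / p j⌋ := by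
  rcases eq_or_ne g (σ j) with rfl | hgh
  · rw [card_eq_sum_ones, Nat.cast_sum]
    refine sum_le_sum fun t ht => Int.le_floor.2 ?_
    rw [Nat.cast_one, Int.cast_one, le_div_iff₀ hq, one_mul]
    exact hp (mem_jobsBefore.1 ht).1.le
  have hbal := hσ.slotBalance_jobsBefore hp hq hgh j le_rfl
  have hK := hbal.nonneg (sub_nonneg.2 (hσ.sum_jobsBefore_le j g))
  omega

theorem IsLPT.mul_card_add_one_le_sum_floor (hσ : IsLPT p σ) (hp : Antitone p)
    (hp0 : ∀ t, 0 ≤ p t) {j : Fin n} (hq : 0 < p j) :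
    (m * #(jobsBefore σ j (σ j)) + 1 : ℤ) ≤ ∑ t, ⌊p t / p j⌋ := by
  have hbefore : (m * #(jobsBefore σ j (σ j)) : ℤ) ≤
      ∑ t : Fin n with t.val < j.val, ⌊p t / p j⌋ := by
    simpa using nsmul_le_sum_of_le_sum_jobsBefore (hσ.card_jobsBefore_le_sum_floor hp hq)
  have hrest := add_sum_val_lt_le_sum (fun t => Int.floor_nonneg.2 (div_nonneg (hp0 t) hq.le)) j
  rw [div_self hq.ne', Int.floor_one] at hrest
  linarith

theorem IsLPT.card_add_one_mul_le_optMakespan (hσ : IsLPT p σ) (hp : Antitone p)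
    (hp0 : ∀ t, 0 ≤ p t) (j : Fin n) :
    (#(jobsBefore σ j (σ j)) + 1) * p j ≤ optMakespan m p := by
  have : Nonempty (Fin m) := ⟨σ j⟩
  refine le_ciInf fun τ => ?_
  rcases (hp0 j).eq_or_lt with hq | hq
  · rw [← hq, mul_zero]
    exact makespan_nonneg p τ hp0
  have hm : (1 : ℤ) ≤ m := by exact_mod_cast Fin.pos'
  have hslots := (hσ.mul_card_add_one_le_sum_floor hp hp0 hq).trans
    (sum_floor_div_le_mul_floor_makespan p τ hq)
  have hfloor : ((#(jobsBefore σ j (σ j)) + 1 : ℕ) : ℤ) ≤ ⌊makespan p τ / p j⌋ := by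
    push_cast; nlinarith
  rw [← le_div_iff₀ hq]
  exact_mod_cast Int.le_floor.1 hfloor

theorem IsLPT.mul_sum_jobsBefore_add_le (hσ : IsLPT p σ) (hp0 : ∀ t, 0 ≤ p t) (j : Fin n) :
    m * ∑ t ∈ jobsBefore σ j (σ j), p t + p j ≤ ∑ t, p t := by
  have hbefore := nsmul_le_sum_of_le_sum_jobsBefore (hσ.sum_jobsBefore_le j)
  rw [nsmul_eq_mul] at hbefore
  linarith [add_sum_val_lt_le_sum hp0 j]

end LPT

theorem stmt17_general {m n : ℕ} (k : ℕ) (hk : 3 ≤ k)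
    (p : Fin n → ℝ) (hp : SortedNonneg p)
    (σ : Fin n → Fin m) (hσ : IsLPT p σ)
    (i : Fin m) (hcritM : mload p σ i = makespan p σ)
    (hcard : (Finset.univ.filter (fun t => σ t = i)).card = k) :
    makespan p σ ≤ (((k : ℝ) + 1) / k - 1 / ((k : ℝ) * m)) * optMakespan m p := by
  have : Nonempty (Fin m) := ⟨i⟩
  obtain ⟨hanti, hp0⟩ := hp
  have hne : ({t | σ t = i} : Finset (Fin n)).Nonempty := by
    rw [← card_pos, hcard]; omega
  obtain ⟨j, hj, hjlast⟩ : ∃ j ∈ ({t | σ t = i} : Finset (Fin n)), ∀ t, σ t = i → t ≤ j :=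
    ⟨_, max'_mem _ hne, fun t ht => le_max' _ t (by simpa using ht)⟩
  obtain rfl : σ j = i := (mem_filter.1 hj).2
  have hjobs := filter_eq_insert_jobsBefore hjlast
  have hnotMem := self_notMem_jobsBefore (σ := σ) j (σ j)
  have hN : ((#(jobsBefore σ j (σ j)) + 1 : ℕ) : ℝ) = k := by
    rw [← hcard, hjobs, card_insert_of_notMem hnotMem]
  have hC : makespan p σ = p j + ∑ t ∈ jobsBefore σ j (σ j), p t := by
    rw [← hcritM, mload, hjobs, sum_insert hnotMem]
  have hload := hσ.mul_sum_jobsBefore_add_le hp0 j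
  have htotal := sum_le_mul_optMakespan (m := m) p
  have hjob := hσ.card_add_one_mul_le_optMakespan hanti hp0 j
  rw [← Nat.cast_add_one, hN] at hjob
  have hm : (1 : ℝ) ≤ m := by exact_mod_cast Fin.pos'
  have hkpos : (0 : ℝ) < k := by exact_mod_cast (by omega : 0 < k)
  have hcoef : ((k : ℝ) + 1) / k - 1 / (k * m) = (k * m + (m - 1)) / (k * m) := by
    field_simp
    ring
  rw [hcoef, div_mul_eq_mul_div, le_div_iff₀ (by positivity), hC]
  nlinarith [mul_le_mul_of_nonneg_left hjob (by linarith : (0 : ℝ) ≤ m - 1)]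

/-- bound `r_k`, `k ≥ 3`: if the critical machine of an LPT schedule
is assigned exactly `k ≥ 3` jobs, then `C^LPT ≤ ((k+1)/k − 1/(k·m)) · C*`. -/
theorem stmt17 {m n : ℕ} (hm : 1 ≤ m) (k : ℕ) (hk : 3 ≤ k)
    (p : Fin n → ℝ) (hp : SortedNonneg p)
    (σ : Fin n → Fin m) (hσ : IsLPT p σ)
    (i : Fin m) (hcritM : mload p σ i = makespan p σ)
    (hcard : (Finset.univ.filter (fun t => σ t = i)).card = k) :
    makespan p σ ≤ (((k : ℝ) + 1) / k - 1 / ((k : ℝ) * m)) * optMakespan m p :=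
  stmt17_general k hk p hp σ hσ i hcritM hcard
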